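/- Let t_F be the unique positive root of J(t) = 1, and define v : [0,∞) → ℝ by v(0) = 0, v(t) = e^{−t}·J(t) for 0 < t ≤ t_F, and v(t) = (e^{t_F} − t_F − 1)·I(t, t_F) + e^{−t_F} for t > t_F. Then v is continuous on [0,∞), continuously differentiable on (0,∞), strictly increasing, satisfies v(t) ≤ e^{−t} for t ≤ t_F and v(t) > e^{−t} for t > t_F, and solves the dynamic-programming equation v'(t) = −v(t) + (1/t)·∫_0^t max(e^{−s}, v(s)) ds for all t > 0. -/

import Mathlib

open MeasureTheory ProbabilityTheory Real

open MeasureTheory ProbabilityTheory Real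

/-- Signless Stirling numbers of the first kind: coefficient of `x^j` in `x(x+1)⋯(x+k-1)`. -/
noncomputable def stirling1 (k j : ℕ) : ℝ :=
  (∏ i ∈ Finset.range k, (Polynomial.X + Polynomial.C (i : ℝ))).coeff j

/-- Stirling numbers of the second kind. -/
def stirling2 : ℕ → ℕ → ℕ
  | 0, 0 => 1
  | 0, _ + 1 => 0
  | _ + 1, 0 => 0
  | n + 1, k + 1 => (k + 1) * stirling2 n (k + 1) + stirling2 n k

/-- `p_j(t) = e^{-t} Σ_{k≥j} (t^k/k!) σ₁(k,j)/k!` (terms with `k<j` vanish). -/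
noncomputable def pfn (j : ℕ) (t : ℝ) : ℝ :=
  Real.exp (-t) * ∑' k : ℕ, t ^ k / (Nat.factorial k : ℝ) * (stirling1 k j / (Nat.factorial k : ℝ))

/-- `q_j(t) = e^{-t} Σ_{k≥0} (t^k/(k+1)!) Σ_{i=0}^k σ₁(i,j)/i!`. -/
noncomputable def qfn (j : ℕ) (t : ℝ) : ℝ :=
  Real.exp (-t) * ∑' k : ℕ, t ^ k / (Nat.factorial (k + 1) : ℝ) *
    ∑ i ∈ Finset.range (k + 1), stirling1 i j / (Nat.factorial i : ℝ)

/-- `I(t,s) = ∫_s^t e^{-ξ}/ξ dξ`. -/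
noncomputable def Ifun (t s : ℝ) : ℝ := ∫ ξ in s..t, Real.exp (-ξ) / ξ

/-- `I(s) = ∫_s^∞ e^{-ξ}/ξ dξ`. -/
noncomputable def Iinf (s : ℝ) : ℝ := ∫ ξ in Set.Ioi s, Real.exp (-ξ) / ξ

/-- `I₂(t,s) = ∫_s^t e^{-ξ}/ξ² dξ`. -/
noncomputable def I2fun (t s : ℝ) : ℝ := ∫ ξ in s..t, Real.exp (-ξ) / ξ ^ 2

/-- `I₂(s) = ∫_s^∞ e^{-ξ}/ξ² dξ`. -/
noncomputable def I2inf (s : ℝ) : ℝ := ∫ ξ in Set.Ioi s, Real.exp (-ξ) / ξ ^ 2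

/-- `J(t) = ∫_0^t (e^ξ - 1)/ξ dξ`. -/
noncomputable def Jfun (t : ℝ) : ℝ := ∫ ξ in (0:ℝ)..t, (Real.exp ξ - 1) / ξ

/-!
On `(0, t_F]`, `v(t) = e^{-t} J(t)`, and `J ≤ 1` there keeps it below `e^{-t}`; beyond `t_F`
it is `e^{-t_F}` plus a positive multiple of `I(t, t_F)`, hence above `e^{-t_F} > e^{-t}`. The two
pieces and their derivatives `e^{-t}((e^t - 1)/t - J(t))` and `(e^{t_F} - t_F - 1) e^{-t}/t` agree
at `t_F` precisely because `J(t_F) = 1`, so `v` is `C¹` with positive derivative. For the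
dynamic-programming equation, `∫_0^t max(e^{-s}, v(s)) ds` has the explicit antiderivative
`1 - e^{-t}` on `[0, t_F]` and `(e^{t_F} - t_F - 1)(t I(t, t_F) + e^{-t}) + t e^{-t_F}` beyond,
and the equation reduces to `t (v' + v)` being this antiderivative.
-/

open Set Filter

theorem continuousAt_ite_le {α β : Type*} [TopologicalSpace α] [LinearOrder α]
    [OrderClosedTopology α] [TopologicalSpace β] {f g : α → β} {a x : α}
    (hf : x ≤ a → ContinuousAt f x) (hg : a ≤ x → ContinuousAt g x) (hfg : f a = g a) :
    ContinuousAt (fun y => if y ≤ a then f y else g y) x := by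
  rcases lt_trichotomy x a with hxa | rfl | hax
  · exact (hf hxa.le).congr <| eventually_of_mem (Iio_mem_nhds hxa) fun y hy => (if_pos hy.le).symm
  · have hl : ContinuousWithinAt (fun y => if y ≤ x then f y else g y) (Iic x) x :=
      (hf le_rfl).continuousWithinAt.congr (fun y hy => if_pos hy) (if_pos le_rfl)
    have hr : ContinuousWithinAt (fun y => if y ≤ x then f y else g y) (Ici x) x := by
      refine (hg le_rfl).continuousWithinAt.congr (fun y hy => ?_) (by simp [hfg])
      split_ifs with h
      · rw [le_antisymm h hy, hfg]
      · rfl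
    simpa only [Iic_union_Ici, continuousWithinAt_univ] using hl.union hr
  · exact (hg hax.le).congr <|
      eventually_of_mem (Ioi_mem_nhds hax) fun y hy => (if_neg (not_le.2 hy)).symm

theorem hasDerivAt_ite_le {E : Type*} [NormedAddCommGroup E] [NormedSpace ℝ E]
    {f g f' g' : ℝ → E} {a x : ℝ}
    (hf : x ≤ a → HasDerivAt f (f' x) x) (hg : a ≤ x → HasDerivAt g (g' x) x)
    (hfg : f a = g a) (hfg' : f' a = g' a) :
    HasDerivAt (fun y => if y ≤ a then f y else g y) (if x ≤ a then f' x else g' x) x := by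
  rcases lt_trichotomy x a with hxa | rfl | hax
  · rw [if_pos hxa.le]
    exact (hf hxa.le).congr_of_eventuallyEq <|
      eventually_of_mem (Iio_mem_nhds hxa) fun y hy => if_pos hy.le
  · rw [if_pos le_rfl]
    have hl : HasDerivWithinAt (fun y => if y ≤ x then f y else g y) (f' x) (Iic x) x :=
      (hf le_rfl).hasDerivWithinAt.congr (fun y hy => if_pos hy) (if_pos le_rfl)
    have hr : HasDerivWithinAt (fun y => if y ≤ x then f y else g y) (f' x) (Ici x) x := by
      rw [hfg']
      refine (hg le_rfl).hasDerivWithinAt.congr (fun y hy => ?_) (by simp [hfg])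
      split_ifs with h
      · rw [le_antisymm h hy, hfg]
      · rfl
    simpa only [Iic_union_Ici, hasDerivWithinAt_univ] using hl.union hr
  · rw [if_neg (not_le.2 hax)]
    exact (hg hax.le).congr_of_eventuallyEq <|
      eventually_of_mem (Ioi_mem_nhds hax) fun y hy => if_neg (not_le.2 hy)

theorem dslope_exp_zero {ξ : ℝ} (h : ξ ≠ 0) : dslope exp 0 ξ = (exp ξ - 1) / ξ := by
  rw [dslope_of_ne _ h, slope_def_field, exp_zero, sub_zero]

theorem continuous_dslope_exp_zero : Continuous (dslope exp 0) := by
  refine continuous_iff_continuousAt.2 fun ξ => ?_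
  rcases eq_or_ne ξ 0 with rfl | h
  · exact continuousAt_dslope_same.2 (differentiableAt_exp)
  · exact (continuousAt_dslope_of_ne h).2 continuous_exp.continuousAt

theorem one_lt_dslope_exp_zero {ξ : ℝ} (h : 0 < ξ) : 1 < dslope exp 0 ξ := by
  rw [dslope_exp_zero h.ne', lt_div_iff₀ h]
  linarith [add_one_lt_exp h.ne']

theorem Jfun_eq_integral_dslope (t : ℝ) : Jfun t = ∫ ξ in (0:ℝ)..t, dslope exp 0 ξ :=
  intervalIntegral.integral_congr_ae <| (volume.ae_ne 0).mono fun _ hξ _ =>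
    (dslope_exp_zero hξ).symm

theorem Jfun_zero : Jfun 0 = 0 := intervalIntegral.integral_same

theorem hasDerivAt_Jfun (t : ℝ) : HasDerivAt Jfun (dslope exp 0 t) t := by
  rw [funext Jfun_eq_integral_dslope]
  exact (continuous_dslope_exp_zero.integral_hasStrictDerivAt 0 t).hasDerivAt

theorem continuous_Jfun : Continuous Jfun :=
  continuous_iff_continuousAt.2 fun t => (hasDerivAt_Jfun t).continuousAt

theorem strictMonoOn_Jfun : StrictMonoOn Jfun (Ici 0) := by
  refine strictMonoOn_of_deriv_pos (convex_Ici 0) continuous_Jfun.continuousOn fun x hx => ?_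
  rw [interior_Ici] at hx
  rw [(hasDerivAt_Jfun x).deriv]
  exact one_pos.trans (one_lt_dslope_exp_zero hx)

theorem hasDerivAt_Ifun {s t : ℝ} (hs : 0 < s) (ht : 0 < t) :
    HasDerivAt (fun u => Ifun u s) (exp (-t) / t) t := by
  have hcont : ContinuousOn (fun ξ => exp (-ξ) / ξ) (Ioi 0) :=
    (continuous_exp.comp continuous_neg).continuousOn.div continuousOn_id fun _ h => ne_of_gt h
  refine intervalIntegral.integral_hasDerivAt_right ?_ ?_ ?_
  · exact (hcont.mono fun x hx => lt_of_lt_of_le (lt_min hs ht) hx.1).intervalIntegrable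
  · exact (hcont.stronglyMeasurableAtFilter isOpen_Ioi) t ht
  · exact hcont.continuousAt (Ioi_mem_nhds ht)

theorem Ifun_self (s : ℝ) : Ifun s s = 0 := intervalIntegral.integral_same

theorem Ifun_nonneg {s t : ℝ} (hs : 0 < s) (hst : s ≤ t) : 0 ≤ Ifun t s :=
  intervalIntegral.integral_nonneg hst fun _ hu => (div_pos (exp_pos _) (hs.trans_le hu.1)).le

theorem hasDerivAt_exp_neg (t : ℝ) : HasDerivAt (fun u => exp (-u)) (-exp (-t)) t := by
  simpa using (hasDerivAt_neg t).exp

theorem exp_sub_self_sub_one_pos {x : ℝ} (hx : x ≠ 0) : 0 < exp x - x - 1 := by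
  linarith [add_one_lt_exp hx]

namespace FullInfo

noncomputable def lower (t : ℝ) : ℝ := exp (-t) * Jfun t

noncomputable def upper (tF t : ℝ) : ℝ := (exp tF - tF - 1) * Ifun t tF + exp (-tF)

-- The `v` of the statement; for `t < 0` it just continues the formula `e^{-t} J(t)`.
noncomputable def value (tF t : ℝ) : ℝ := if t ≤ tF then lower t else upper tF t

noncomputable def lowerDeriv (t : ℝ) : ℝ := exp (-t) * (dslope exp 0 t - Jfun t)

noncomputable def upperDeriv (tF t : ℝ) : ℝ := (exp tF - tF - 1) * (exp (-t) / t)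

noncomputable def valueDeriv (tF t : ℝ) : ℝ := if t ≤ tF then lowerDeriv t else upperDeriv tF t

noncomputable def maxPrimitive (tF t : ℝ) : ℝ :=
  if t ≤ tF then 1 - exp (-t)
  else (exp tF - tF - 1) * (t * Ifun t tF + exp (-t)) + t * exp (-tF)

variable {tF : ℝ}

theorem hasDerivAt_lower (t : ℝ) : HasDerivAt lower (lowerDeriv t) t := by
  refine ((hasDerivAt_exp_neg t).mul (hasDerivAt_Jfun t)).congr_deriv ?_
  rw [lowerDeriv]
  ring

theorem hasDerivAt_upper (htF : 0 < tF) {t : ℝ} (ht : 0 < t) :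
    HasDerivAt (upper tF) (upperDeriv tF t) t :=
  ((hasDerivAt_Ifun htF ht).const_mul _).add_const _

theorem continuous_lower : Continuous lower :=
  (continuous_exp.comp continuous_neg).mul continuous_Jfun

theorem upper_self : upper tF tF = exp (-tF) := by
  simp [upper, Ifun_self]

theorem lower_eq_upper (hroot : Jfun tF = 1) : lower tF = upper tF tF := by
  rw [upper_self, lower, hroot, mul_one]

theorem lowerDeriv_eq_upperDeriv (htF : 0 < tF) (hroot : Jfun tF = 1) :
    lowerDeriv tF = upperDeriv tF tF := by
  rw [lowerDeriv, upperDeriv, hroot, dslope_exp_zero htF.ne']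
  field_simp
  ring

theorem hasDerivAt_value (htF : 0 < tF) (hroot : Jfun tF = 1) (t : ℝ) :
    HasDerivAt (value tF) (valueDeriv tF t) t :=
  hasDerivAt_ite_le (fun _ => hasDerivAt_lower t) (fun h => hasDerivAt_upper htF (htF.trans_le h))
    (lower_eq_upper hroot) (lowerDeriv_eq_upperDeriv htF hroot)

theorem continuousOn_value (htF : 0 < tF) (hroot : Jfun tF = 1) :
    ContinuousOn (value tF) (Ici 0) := fun _ _ =>
  (continuousAt_ite_le (fun _ => continuous_lower.continuousAt)
    (fun h => (hasDerivAt_upper htF (htF.trans_le h)).continuousAt)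
    (lower_eq_upper hroot)).continuousWithinAt

theorem continuousOn_valueDeriv (htF : 0 < tF) (hroot : Jfun tF = 1) :
    ContinuousOn (valueDeriv tF) (Ioi 0) := by
  refine fun _ _ => (continuousAt_ite_le (fun _ => ?_) (fun h => ?_)
    (lowerDeriv_eq_upperDeriv htF hroot)).continuousWithinAt
  · exact ((continuous_exp.comp continuous_neg).mul
      (continuous_dslope_exp_zero.sub continuous_Jfun)).continuousAt
  · exact continuousAt_const.mul ((continuous_exp.comp continuous_neg).continuousAt.div
      continuousAt_id (htF.trans_le h).ne')

theorem Jfun_le_one (hroot : Jfun tF = 1) {t : ℝ} (h0 : 0 ≤ t) (ht : t ≤ tF) : Jfun t ≤ 1 :=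
  hroot ▸ strictMonoOn_Jfun.monotoneOn h0 (h0.trans ht) ht

theorem valueDeriv_pos (htF : 0 < tF) (hroot : Jfun tF = 1) {t : ℝ} (ht : 0 < t) :
    0 < valueDeriv tF t := by
  unfold valueDeriv
  split_ifs with h
  · have := one_lt_dslope_exp_zero ht
    have := Jfun_le_one hroot ht.le h
    exact mul_pos (exp_pos _) (by linarith)
  · exact mul_pos (exp_sub_self_sub_one_pos htF.ne') (div_pos (exp_pos _) ht)

theorem strictMonoOn_value (htF : 0 < tF) (hroot : Jfun tF = 1) :
    StrictMonoOn (value tF) (Ici 0) := by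
  refine strictMonoOn_of_deriv_pos (convex_Ici 0) (continuousOn_value htF hroot) fun t ht => ?_
  rw [interior_Ici] at ht
  rw [(hasDerivAt_value htF hroot t).deriv]
  exact valueDeriv_pos htF hroot ht

theorem value_le_exp_neg (hroot : Jfun tF = 1) {t : ℝ} (h0 : 0 ≤ t) (ht : t ≤ tF) :
    value tF t ≤ exp (-t) := by
  rw [value, if_pos ht, lower]
  exact mul_le_of_le_one_right (exp_pos _).le (Jfun_le_one hroot h0 ht)

theorem exp_neg_lt_upper (htF : 0 < tF) {t : ℝ} (ht : tF < t) : exp (-t) < upper tF t := by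
  have hI := mul_nonneg (exp_sub_self_sub_one_pos htF.ne').le (Ifun_nonneg htF ht.le)
  have := exp_lt_exp.2 (neg_lt_neg ht)
  rw [upper]
  linarith

theorem max_exp_neg_value (htF : 0 < tF) (hroot : Jfun tF = 1) {t : ℝ} (ht : 0 ≤ t) :
    max (exp (-t)) (value tF t) = if t ≤ tF then exp (-t) else upper tF t := by
  split_ifs with h
  · exact max_eq_left (value_le_exp_neg hroot ht h)
  · rw [value, if_neg h]
    exact max_eq_right (exp_neg_lt_upper htF (not_le.1 h)).le

theorem hasDerivAt_maxPrimitive (htF : 0 < tF) (hroot : Jfun tF = 1) {t : ℝ} (ht : 0 ≤ t) :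
    HasDerivAt (maxPrimitive tF) (max (exp (-t)) (value tF t)) t := by
  rw [max_exp_neg_value htF hroot ht]
  refine hasDerivAt_ite_le (f' := fun t => exp (-t)) (fun _ => ?_) (fun h => ?_) ?_
    upper_self.symm
  · simpa using (hasDerivAt_exp_neg t).const_sub 1
  · have ht' : 0 < t := htF.trans_le h
    refine ((((hasDerivAt_id' t).mul (hasDerivAt_Ifun htF ht')).add
      (hasDerivAt_exp_neg t)).const_mul (exp tF - tF - 1) |>.add
      ((hasDerivAt_id' t).mul_const (exp (-tF)))).congr_deriv ?_
    rw [upper]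
    field_simp
    ring
  · rw [Ifun_self, exp_neg]
    field_simp
    ring

theorem integral_max_exp_neg_value (htF : 0 < tF) (hroot : Jfun tF = 1) {t : ℝ} (ht : 0 ≤ t) :
    ∫ s in (0:ℝ)..t, max (exp (-s)) (value tF s) = maxPrimitive tF t := by
  have hsub : uIcc 0 t ⊆ Ici 0 := by
    rw [uIcc_of_le ht]
    exact Icc_subset_Ici_self
  have hint : ContinuousOn (fun s => max (exp (-s)) (value tF s)) (uIcc 0 t) :=
    ContinuousOn.sup (continuous_exp.comp continuous_neg).continuousOn
      ((continuousOn_value htF hroot).mono hsub)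
  rw [intervalIntegral.integral_eq_sub_of_hasDerivAt
    (fun s hs => hasDerivAt_maxPrimitive htF hroot (hsub hs)) hint.intervalIntegrable]
  simp [maxPrimitive, htF.le]

theorem valueDeriv_eq {t : ℝ} (ht : t ≠ 0) :
    valueDeriv tF t = -value tF t + 1 / t * maxPrimitive tF t := by
  unfold valueDeriv lowerDeriv upperDeriv value maxPrimitive lower upper
  split_ifs
  · rw [dslope_exp_zero ht, exp_neg]
    field_simp
    ring
  · field_simp
    ring

end FullInfo

theorem stmt17_general (tF : ℝ) (htF : 0 < tF) (hroot : Jfun tF = 1)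
    (v : ℝ → ℝ) (hv0 : v 0 = 0)
    (hv1 : ∀ t : ℝ, 0 < t → t ≤ tF → v t = Real.exp (-t) * Jfun t)
    (hv2 : ∀ t : ℝ, tF < t →
      v t = (Real.exp tF - tF - 1) * Ifun t tF + Real.exp (-tF)) :
    ContinuousOn v (Set.Ici 0) ∧
    StrictMonoOn v (Set.Ici 0) ∧
    (∀ t : ℝ, 0 ≤ t → t ≤ tF → v t ≤ Real.exp (-t)) ∧
    (∀ t : ℝ, tF < t → v t > Real.exp (-t)) ∧
    ∃ v' : ℝ → ℝ, ContinuousOn v' (Set.Ioi 0) ∧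
      (∀ t : ℝ, 0 < t → HasDerivAt v (v' t) t) ∧
      (∀ t : ℝ, 0 < t →
        v' t = -v t + (1 / t) * ∫ s in (0:ℝ)..t, max (Real.exp (-s)) (v s)) := by
  open FullInfo in
  have hv : EqOn v (value tF) (Ici 0) := by
    intro t (ht : 0 ≤ t)
    rcases ht.eq_or_lt with rfl | ht
    · simp [value, htF.le, lower, hv0, Jfun_zero]
    · unfold value
      split_ifs with h
      · exact hv1 t ht h
      · exact hv2 t (not_le.1 h)
  refine ⟨(continuousOn_value htF hroot).congr hv, (strictMonoOn_value htF hroot).congr hv.symm,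
    fun t h0 ht => hv h0 ▸ value_le_exp_neg hroot h0 ht,
    fun t ht => hv2 t ht ▸ exp_neg_lt_upper htF ht, valueDeriv tF,
    continuousOn_valueDeriv htF hroot, fun t ht => ?_, fun t ht => ?_⟩
  · exact (hasDerivAt_value htF hroot t).congr_of_eventuallyEq <|
      eventually_of_mem (Ioi_mem_nhds ht) fun s hs => hv (Ioi_subset_Ici_self hs)
  · have hmax : EqOn (fun s => max (exp (-s)) (v s)) (fun s => max (exp (-s)) (value tF s))
        (uIcc 0 t) := fun s hs =>
      congrArg (max (exp (-s))) (hv (uIcc_of_le ht.le ▸ hs).1)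
    rw [intervalIntegral.integral_congr hmax, integral_max_exp_neg_value htF hroot ht.le,
      hv ht.le, valueDeriv_eq ht.ne']

/-- Solution of the full-information dynamic-programming equation. With `t_F` the unique
positive root of `J(t) = 1`, the function `v` given by `v(0) = 0`, `v(t) = e^{-t}J(t)` on
`(0, t_F]` and `v(t) = (e^{t_F} - t_F - 1)I(t,t_F) + e^{-t_F}` on `(t_F, ∞)` is continuous on
`[0,∞)`, continuously differentiable on `(0,∞)`, strictly increasing, satisfies
`v(t) ≤ e^{-t}` for `t ≤ t_F` and `v(t) > e^{-t}` for `t > t_F`, and solves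
`v'(t) = -v(t) + (1/t)∫_0^t max(e^{-s}, v(s)) ds` for all `t > 0`. -/
theorem stmt17 (tF : ℝ) (htF : 0 < tF) (hroot : Jfun tF = 1)
    (huniq : ∀ t : ℝ, 0 < t → Jfun t = 1 → t = tF)
    (v : ℝ → ℝ) (hv0 : v 0 = 0)
    (hv1 : ∀ t : ℝ, 0 < t → t ≤ tF → v t = Real.exp (-t) * Jfun t)
    (hv2 : ∀ t : ℝ, tF < t →
      v t = (Real.exp tF - tF - 1) * Ifun t tF + Real.exp (-tF)) :
    ContinuousOn v (Set.Ici 0) ∧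
    StrictMonoOn v (Set.Ici 0) ∧
    (∀ t : ℝ, 0 ≤ t → t ≤ tF → v t ≤ Real.exp (-t)) ∧
    (∀ t : ℝ, tF < t → v t > Real.exp (-t)) ∧
    ∃ v' : ℝ → ℝ, ContinuousOn v' (Set.Ioi 0) ∧
      (∀ t : ℝ, 0 < t → HasDerivAt v (v' t) t) ∧
      (∀ t : ℝ, 0 < t →
        v' t = -v t + (1 / t) * ∫ s in (0:ℝ)..t, max (Real.exp (-s)) (v s)) :=
  stmt17_general tF htF hroot v hv0 hv1 hv2
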